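/- arXiv:2605.15821 — 3 statements merged into one kernel-verified Lean document; each statement's English description precedes it below -/
import Mathlib

section
/- Let f be a real polynomial in n variables with deg f = d. Then ‖f‖_{1,coef} − f belongs to the truncated preprime R(1 ± x)_d. -/
open MvPolynomial

noncomputable section

/-- A polynomial is a sum of squares. -/
def IsSOS {n : ℕ} (p : MvPolynomial (Fin n) ℝ) : Prop :=
  ∃ (k : ℕ) (q : Fin k → MvPolynomial (Fin n) ℝ), p = ∑ i, q i ^ 2

/-- The truncated quadratic module `Q(g)_r`. -/
def QM {n : ℕ} {ι : Type} [Fintype ι] (g : ι → MvPolynomial (Fin n) ℝ) (r : ℕ) :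
    Set (MvPolynomial (Fin n) ℝ) :=
  { p | ∃ (σ₀ : MvPolynomial (Fin n) ℝ) (σ : ι → MvPolynomial (Fin n) ℝ),
      IsSOS σ₀ ∧ (∀ j, IsSOS (σ j)) ∧ σ₀.totalDegree ≤ r ∧
      (∀ j, (σ j * g j).totalDegree ≤ r) ∧
      p = σ₀ + ∑ j, σ j * g j }

/-- The truncated preorder `T(g)_r`. -/
def TP {n : ℕ} {ι : Type} [Fintype ι] [DecidableEq ι] (g : ι → MvPolynomial (Fin n) ℝ)
    (r : ℕ) : Set (MvPolynomial (Fin n) ℝ) :=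
  { p | ∃ σ : Finset ι → MvPolynomial (Fin n) ℝ,
      (∀ S, IsSOS (σ S)) ∧ (∀ S : Finset ι, (σ S * ∏ j ∈ S, g j).totalDegree ≤ r) ∧
      p = ∑ S : Finset ι, σ S * ∏ j ∈ S, g j }

/-- The truncated preprime `R(g)_r`. -/
def RP {n : ℕ} {ι : Type} [Fintype ι] (g : ι → MvPolynomial (Fin n) ℝ) (r : ℕ) :
    Set (MvPolynomial (Fin n) ℝ) :=
  { p | ∃ (A : Finset (ι → ℕ)) (s : (ι → ℕ) → ℝ),
      (∀ α ∈ A, 0 ≤ s α) ∧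
      (∀ α ∈ A, s α ≠ 0 → (MvPolynomial.C (s α) * ∏ j, g j ^ α j).totalDegree ≤ r) ∧
      p = ∑ α ∈ A, MvPolynomial.C (s α) * ∏ j, g j ^ α j }

/-- The tuple of the `2n` polynomials `1 ± xᵢ`. -/
def pmX (n : ℕ) : Fin n × Bool → MvPolynomial (Fin n) ℝ :=
  fun q => if q.2 then 1 + MvPolynomial.X q.1 else 1 - MvPolynomial.X q.1

/-- The hypercube `[-1,1]^n`. -/
def Box (n : ℕ) : Set (Fin n → ℝ) := { x | ∀ i, |x i| ≤ 1 }

/-- The hypercube `[0,1]^n`. -/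
def Box01 (n : ℕ) : Set (Fin n → ℝ) := { x | ∀ i, 0 ≤ x i ∧ x i ≤ 1 }

/-- The sup norm of a polynomial on `[-1,1]^n`. -/
def supNorm {n : ℕ} (f : MvPolynomial (Fin n) ℝ) : ℝ :=
  sSup ((fun x => |MvPolynomial.eval x f|) '' Box n)

/-- The sup norm of a polynomial on `[0,1]^n`. -/
def supNorm01 {n : ℕ} (f : MvPolynomial (Fin n) ℝ) : ℝ :=
  sSup ((fun x => |MvPolynomial.eval x f|) '' Box01 n)

/-- The semialgebraic set `S_g`. -/
def Sg {n m : ℕ} (g : Fin m → MvPolynomial (Fin n) ℝ) : Set (Fin n → ℝ) :=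
  { x | ∀ j, 0 ≤ MvPolynomial.eval x (g j) }

/-- The maximum violation function `G`. -/
def Gfun {n m : ℕ} (g : Fin m → MvPolynomial (Fin n) ℝ) (x : Fin n → ℝ) : ℝ :=
  ⨆ j, max 0 (-(MvPolynomial.eval x (g j)))

/-- The squared Euclidean norm of the violation vector `H`. -/
def Hfun {n m : ℕ} (g : Fin m → MvPolynomial (Fin n) ℝ) (x : Fin n → ℝ) : ℝ :=
  ∑ j, max 0 (-(MvPolynomial.eval x (g j))) ^ 2

/-- Euclidean distance from a point to a set. -/
def euclDist {n : ℕ} (x : Fin n → ℝ) (S : Set (Fin n → ℝ)) : ℝ :=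
  sInf ((fun y => Real.sqrt (∑ i, (x i - y i) ^ 2)) '' S)

/-- The minimum of `f` over `S_g`. -/
def fMin {n m : ℕ} (g : Fin m → MvPolynomial (Fin n) ℝ) (f : MvPolynomial (Fin n) ℝ) : ℝ :=
  sInf ((fun x => MvPolynomial.eval x f) '' Sg g)

/-- The ℓ₁ norm of the coefficient vector of `f`. -/
def coeffL1 {n : ℕ} (f : MvPolynomial (Fin n) ℝ) : ℝ :=
  ∑ α ∈ f.support, |MvPolynomial.coeff α f|

/-- The constant `C(N,D)` of the effective Schmüdgen Positivstellensatz on the cube. -/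
def Cconst (N D : ℕ) : ℝ :=
  Real.pi * (N : ℝ) ^ ((1:ℝ)/2) * (Real.sqrt 2 * ((D : ℝ) + 1)) ^ ((N : ℝ)/2 + 1)

end

/-!
Each term of `f` contributes `|c| - c x^α` to `‖f‖_{1,coef} − f`, so it suffices to show
`a - c x^α ∈ R(1 ± x)_{|α|}` whenever `|c| ≤ a`. This follows by induction on `|α|` from
`a - c xᵢ m = ½ (1 + xᵢ)(a - c m) + ½ (1 - xᵢ)(a + c m)`, whose two factors `a ∓ c m` are again of
the same shape.
-/

theorem MvPolynomial.totalDegree_C_mul_of_ne_zero {σ K : Type*} [Field K] {c : K} (hc : c ≠ 0)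
    (p : MvPolynomial σ K) : (C c * p).totalDegree = p.totalDegree := by
  rw [C_mul', totalDegree, support_smul_eq hc]
  rfl

theorem Finset.prod_pow_add_piSingle {ι M : Type*} [Fintype ι] [DecidableEq ι] [CommMonoid M]
    (g : ι → M) (α : ι → ℕ) (j : ι) :
    ∏ i, g i ^ (α + Pi.single j 1 : ι → ℕ) i = g j * ∏ i, g i ^ α i := by
  simp only [Pi.add_apply, pow_add, Finset.prod_mul_distrib, Pi.single_apply, pow_ite, pow_one,
    pow_zero, Finset.prod_ite_eq', Finset.mem_univ, if_true, mul_comm]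

namespace RP

variable {n : ℕ} {ι : Type} [Fintype ι] {g : ι → MvPolynomial (Fin n) ℝ} {r : ℕ}
  {p q : MvPolynomial (Fin n) ℝ}

theorem mem_iff : p ∈ RP g r ↔ ∃ s : (ι → ℕ) →₀ ℝ, (∀ α, 0 ≤ s α) ∧
    (∀ α ∈ s.support, (∏ j, g j ^ α j).totalDegree ≤ r) ∧
    p = s.sum fun α c => C c * ∏ j, g j ^ α j := by
  classical
  constructor
  · rintro ⟨A, s, hs, hdeg, rfl⟩
    refine ⟨Finsupp.onFinset A (fun α => if α ∈ A then s α else 0)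
      (fun α h => by by_contra hα; simp [hα] at h), fun α => ?_, fun α hα => ?_, ?_⟩
    · rw [Finsupp.onFinset_apply]
      split_ifs with h
      exacts [hs α h, le_rfl]
    · have hα' : α ∈ A ∧ s α ≠ 0 := by simpa using hα
      rw [← totalDegree_C_mul_of_ne_zero hα'.2]
      exact hdeg α hα'.1 hα'.2
    · rw [Finsupp.onFinset_sum _ (fun _ => by simp)]
      exact Finset.sum_congr rfl fun α hα => by simp [hα]
  · rintro ⟨s, hs, hdeg, rfl⟩
    exact ⟨s.support, s, fun α _ => hs α,
      fun α hα h0 => (totalDegree_C_mul_of_ne_zero h0 _).trans_le (hdeg α hα), rfl⟩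

theorem C_mem {c : ℝ} (hc : 0 ≤ c) : C c ∈ RP g r :=
  mem_iff.2 ⟨Finsupp.single 0 c, fun α => Finsupp.single_nonneg.2 hc α, fun α hα => by
    obtain rfl := Finset.mem_singleton.1 (Finsupp.support_single_subset hα)
    simp, by simp⟩

theorem zero_mem : (0 : MvPolynomial (Fin n) ℝ) ∈ RP g r := by
  simpa using C_mem (g := g) (r := r) le_rfl

theorem add_mem (hp : p ∈ RP g r) (hq : q ∈ RP g r) : p + q ∈ RP g r := by
  classical
  obtain ⟨s, hs, hsdeg, rfl⟩ := mem_iff.1 hp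
  obtain ⟨t, ht, htdeg, rfl⟩ := mem_iff.1 hq
  refine mem_iff.2 ⟨s + t, fun α => add_nonneg (hs α) (ht α), fun α hα => ?_,
    (Finsupp.sum_add_index' (by simp) (by simp [add_mul])).symm⟩
  rcases Finset.mem_union.1 (Finsupp.support_add hα) with h | h
  exacts [hsdeg α h, htdeg α h]

theorem C_mul_mem {c : ℝ} (hc : 0 ≤ c) (hp : p ∈ RP g r) : C c * p ∈ RP g r := by
  obtain ⟨s, hs, hdeg, rfl⟩ := mem_iff.1 hp
  refine mem_iff.2 ⟨c • s, fun α => mul_nonneg hc (hs α),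
    fun α hα => hdeg α (Finsupp.support_smul hα), ?_⟩
  rw [Finsupp.sum_smul_index' (by simp), Finsupp.mul_sum]
  simp [mul_assoc]

theorem mul_mem [DecidableEq ι] {k : ℕ} (j : ι) (hj : (g j).totalDegree ≤ k)
    (hp : p ∈ RP g r) : g j * p ∈ RP g (r + k) := by
  obtain ⟨s, hs, hdeg, rfl⟩ := mem_iff.1 hp
  let shift : (ι → ℕ) ↪ (ι → ℕ) := ⟨(· + Pi.single j 1), add_left_injective _⟩
  refine mem_iff.2 ⟨s.embDomain shift, fun β => ?_, fun β hβ => ?_, ?_⟩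
  · rw [Finsupp.embDomain_apply]
    split_ifs
    exacts [hs _, le_rfl]
  · obtain ⟨α, hα, rfl⟩ := Finset.mem_map.1 ((Finsupp.support_embDomain _ _).le hβ)
    calc (∏ i, g i ^ (α + Pi.single j 1 : ι → ℕ) i).totalDegree
        = (g j * ∏ i, g i ^ α i).totalDegree := by rw [Finset.prod_pow_add_piSingle]
      _ ≤ k + r := (totalDegree_mul _ _).trans (add_le_add hj (hdeg α hα))
      _ = r + k := add_comm k r
  · rw [Finsupp.sum_embDomain, Finsupp.mul_sum]
    exact Finsupp.sum_congr fun α _ => by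
      rw [show shift α = α + Pi.single j 1 from rfl, Finset.prod_pow_add_piSingle, mul_left_comm]

theorem mono {r' : ℕ} (h : r ≤ r') : RP g r ⊆ RP g r' := by
  rintro p ⟨A, s, hs, hdeg, hp⟩
  exact ⟨A, s, hs, fun α hα h0 => (hdeg α hα h0).trans h, hp⟩

end RP

section pmX

variable {n : ℕ}

theorem totalDegree_pmX_le (q : Fin n × Bool) : (pmX n q).totalDegree ≤ 1 := by
  obtain ⟨i, _ | _⟩ := q <;> simp only [pmX, Bool.false_eq_true, if_true, if_false, sub_eq_add_neg]
    <;> refine (totalDegree_add _ _).trans ?_ <;> simp [totalDegree_X]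

theorem C_sub_C_mul_X_mul_mem_RP_pmX {m : MvPolynomial (Fin n) ℝ} {r : ℕ}
    (hm : ∀ a c : ℝ, |c| ≤ a → C a - C c * m ∈ RP (pmX n) r) (i : Fin n) {a c : ℝ}
    (h : |c| ≤ a) : C a - C c * (X i * m) ∈ RP (pmX n) (r + 1) := by
  have hplus := RP.mul_mem (i, true) (totalDegree_pmX_le _) (hm a c h)
  have hminus := RP.mul_mem (i, false) (totalDegree_pmX_le _) (hm a (-c) (by rwa [abs_neg]))
  have half : (C (1 / 2) : MvPolynomial (Fin n) ℝ) * 2 = 1 := by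
    rw [← map_ofNat C 2, ← C_mul]; norm_num
  have key : C a - C c * (X i * m)
      = C (1 / 2) * (pmX n (i, true) * (C a - C c * m))
        + C (1 / 2) * (pmX n (i, false) * (C a - C (-c) * m)) := by
    simp only [pmX, if_true, Bool.false_eq_true, if_false, map_neg]
    linear_combination (C c * (X i * m) - C a) * half
  rw [key]
  exact RP.add_mem (RP.C_mul_mem (by norm_num) hplus) (RP.C_mul_mem (by norm_num) hminus)

theorem C_sub_C_mul_X_pow_mul_mem_RP_pmX {m : MvPolynomial (Fin n) ℝ} {r : ℕ}
    (hm : ∀ a c : ℝ, |c| ≤ a → C a - C c * m ∈ RP (pmX n) r) (i : Fin n) (k : ℕ) :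
    ∀ a c : ℝ, |c| ≤ a → C a - C c * (X i ^ k * m) ∈ RP (pmX n) (r + k) := by
  induction k with
  | zero => simpa using hm
  | succ k ih =>
    intro a c h
    rw [pow_succ', mul_assoc, ← add_assoc]
    exact C_sub_C_mul_X_mul_mem_RP_pmX ih i h

theorem C_sub_monomial_mem_RP_pmX (α : Fin n →₀ ℕ) :
    ∀ {a c : ℝ}, |c| ≤ a → C a - monomial α c ∈ RP (pmX n) α.degree := by
  induction α using Finsupp.induction with
  | zero =>
    intro a c h
    rw [monomial_zero', ← C_sub]
    exact RP.C_mem (by linarith [le_abs_self c])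
  | single_add i b f _ _ ih =>
    intro a c h
    have hm : ∀ a c : ℝ, |c| ≤ a → C a - C c * monomial f 1 ∈ RP (pmX n) f.degree :=
      fun a c h => by rw [C_mul_monomial, mul_one]; exact ih h
    have hc : monomial f c = C c * monomial f 1 := by rw [C_mul_monomial, mul_one]
    rw [monomial_single_add, hc, mul_left_comm, map_add, Finsupp.degree_single, add_comm]
    exact C_sub_C_mul_X_pow_mul_mem_RP_pmX hm i b a c h

end pmX

/-- `‖f‖_{1,coef} − f ∈ R(1 ± x)_d` where `d = deg f`. -/
theorem stmt3 {n : ℕ} (f : MvPolynomial (Fin n) ℝ) (d : ℕ) (hd : f.totalDegree = d) :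
    MvPolynomial.C (coeffL1 f) - f ∈ RP (pmX n) d := by
  have hsplit : C (coeffL1 f) - f = ∑ α ∈ f.support, (C |coeff α f| - monomial α (coeff α f)) := by
    rw [Finset.sum_sub_distrib, support_sum_monomial_coeff, coeffL1, map_sum]
  rw [hsplit]
  refine Finset.sum_induction _ (· ∈ RP (pmX n) d) (fun _ _ => RP.add_mem) RP.zero_mem
    fun α hα => RP.mono ?_ (C_sub_monomial_mem_RP_pmX α le_rfl)
  exact hd ▸ le_totalDegree hα
end

section
/- Let g₁,…,g_m be real polynomials in n variables of degrees at most d_g such that S_g := {x ∈ ℝⁿ : g_j(x) ≥ 0 for all j} is nonempty and contained in [−1,1]ⁿ. Then for all x ∈ [−1,1]ⁿ, G(x) ≤ 2·d_g²·(max_{j=1,…,m} ‖g_j‖_sup)·dist(x, S_g), where G(x) := max_{j=1,…,m} max{0, −g_j(x)}. -/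
open MvPolynomial

/-!
Restricted to a chord of the cube, a polynomial of degree `d` bounded by `M` becomes a
univariate polynomial of degree `d` bounded by `M` on `[-1, 1]`. Markov's inequality at the
endpoint (the extremality of the Chebyshev polynomial `T_d`) bounds its derivative there by
`d² M`, which bounds every directional derivative along sup-norm unit vectors by `2 d² M`. By the
mean value theorem each `g_j` is then `2 d_g² ‖g_j‖`-Lipschitz on the cube for the sup norm,
hence for the Euclidean norm, and for `y ∈ S_g` this gives
`-g_j(x) ≤ g_j(y) - g_j(x) ≤ 2 d_g² ‖g_j‖ |x - y|`.
-/

open scoped Polynomial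

open Metric

theorem Polynomial.abs_derivative_eval_one_le {P : ℝ[X]} {n : ℕ} {M : ℝ} (hdeg : P.degree ≤ n)
    (hbnd : ∀ x ∈ Set.Icc (-1 : ℝ) 1, |P.eval x| ≤ M) :
    |(derivative P).eval 1| ≤ n ^ 2 * M := by
  have hM : 0 ≤ M := (abs_nonneg _).trans (hbnd 1 (by norm_num))
  rcases hM.eq_or_lt with rfl | hM
  · have hP : P = 0 := P.eq_zero_of_infinite_isRoot <|
      (Set.Icc_infinite (by norm_num : (-1 : ℝ) < 1)).mono fun x hx =>
        abs_nonpos_iff.mp (hbnd x hx)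
    simp [hP]
  -- Among polynomials bounded by `1` on `[-1, 1]`, `T n` has the largest derivative at `1`.
  have markov : ∀ Q : ℝ[X], Q.degree ≤ n → (∀ x ∈ Set.Icc (-1 : ℝ) 1, |Q.eval x| ≤ 1) →
      (derivative Q).eval 1 ≤ n ^ 2 := fun Q hQ hbnd => by
    simpa [Chebyshev.derivative_T_eval_one] using
      Chebyshev.eval_iterate_derivative_le_of_forall_abs_le_one (k := 1) le_rfl hQ hbnd
  have hQ : ∀ x ∈ Set.Icc (-1 : ℝ) 1, |(C M⁻¹ * P).eval x| ≤ 1 := fun x hx => by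
    rw [eval_mul, eval_C, abs_mul, abs_inv, abs_of_pos hM, inv_mul_le_one₀ hM]
    exact hbnd x hx
  have hdegQ : (C M⁻¹ * P).degree ≤ n := by rwa [degree_C_mul (inv_ne_zero hM.ne')]
  have h₁ := markov _ hdegQ hQ
  have h₂ := markov (-(C M⁻¹ * P)) (by rwa [degree_neg]) (by simpa only [eval_neg, abs_neg])
  simp only [derivative_mul, derivative_C, zero_mul, zero_add, derivative_neg, eval_neg,
    eval_mul, eval_C, ← mul_neg, inv_mul_le_iff₀ hM] at h₁ h₂
  rw [abs_le, mul_comm]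
  constructor <;> linarith

namespace MvPolynomial

section restrictLine

variable {σ R : Type*} [CommSemiring R]

noncomputable def restrictLine (c v : σ → R) (p : MvPolynomial σ R) : R[X] :=
  aeval (fun i => Polynomial.C (v i) * Polynomial.X + Polynomial.C (c i)) p

theorem eval_restrictLine (c v : σ → R) (p : MvPolynomial σ R) (t : R) :
    (restrictLine c v p).eval t = eval (c + t • v) p := by
  rw [restrictLine, ← Polynomial.coe_aeval_eq_eval, ← AlgHom.comp_apply, comp_aeval,
    aeval_eq_eval]
  congr 2
  funext i
  simp only [map_add, map_mul, Polynomial.aeval_C, Polynomial.aeval_X, Algebra.algebraMap_self,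
    RingHom.id_apply, Pi.add_apply, Pi.smul_apply, smul_eq_mul]
  ring

theorem natDegree_restrictLine_le (c v : σ → R) (p : MvPolynomial σ R) :
    (restrictLine c v p).natDegree ≤ p.totalDegree := by
  conv_lhs => rw [restrictLine, p.as_sum, map_sum]
  refine Polynomial.natDegree_sum_le_of_forall_le _ _ fun α hα => ?_
  rw [aeval_monomial, Polynomial.algebraMap_eq, Finsupp.prod]
  refine (Polynomial.natDegree_C_mul_le _ _).trans <| (Polynomial.natDegree_prod_le _ _).trans ?_
  calc _ ≤ ∑ i ∈ α.support, α i * 1 := by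
        gcongr with i
        exact Polynomial.natDegree_pow_le_of_le _ Polynomial.natDegree_linear_le
    _ ≤ p.totalDegree := by simpa [Finsupp.sum] using le_totalDegree hα

end restrictLine

section Markov

variable {σ : Type*} [Fintype σ]

theorem differentiable_eval (p : MvPolynomial σ ℝ) :
    Differentiable ℝ fun x : σ → ℝ => eval x p :=
  fun x => (AnalyticOnNhd.eval_mvPolynomial p x (Set.mem_univ x)).differentiableAt

theorem eval_derivative_restrictLine (c v : σ → ℝ) (p : MvPolynomial σ ℝ) (t : ℝ) :
    (Polynomial.derivative (restrictLine c v p)).eval t =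
      fderiv ℝ (fun x => eval x p) (c + t • v) v := by
  have hline : HasDerivAt (fun s : ℝ => c + s • v) v t := by
    simpa using ((hasDerivAt_id t).smul_const v).const_add c
  refine (Polynomial.hasDerivAt _ t).unique ?_
  convert (differentiable_eval p (c + t • v)).hasFDerivAt.comp_hasDerivAt t hline using 1
  funext s
  exact eval_restrictLine c v p s

variable {p : MvPolynomial σ ℝ} {d : ℕ} {M : ℝ}

theorem abs_fderiv_eval_sub_le (hp : p.totalDegree ≤ d)
    (hM : ∀ x ∈ closedBall (0 : σ → ℝ) 1, |eval x p| ≤ M) {z w : σ → ℝ}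
    (hz : z ∈ closedBall (0 : σ → ℝ) 1) (hw : w ∈ closedBall (0 : σ → ℝ) 1) :
    |fderiv ℝ (fun x => eval x p) z (z - w)| ≤ 2 * d ^ 2 * M := by
  -- Markov's inequality on the line through `w` (at `t = -1`) and `z` (at `t = 1`)
  set c : σ → ℝ := (1 / 2 : ℝ) • (z + w)
  set v : σ → ℝ := (1 / 2 : ℝ) • (z - w)
  have hseg : ∀ t ∈ Set.Icc (-1 : ℝ) 1, c + t • v ∈ closedBall (0 : σ → ℝ) 1 := fun t ht => by
    have hcomb : c + t • v = ((1 + t) / 2) • z + ((1 - t) / 2) • w := by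
      simp only [c, v]; module
    rw [hcomb]
    exact convex_closedBall _ _ hz hw (by linarith [ht.1]) (by linarith [ht.2]) (by ring)
  have hmarkov := Polynomial.abs_derivative_eval_one_le (P := restrictLine c v p) (n := d)
    (Polynomial.degree_le_of_natDegree_le ((natDegree_restrictLine_le c v p).trans hp))
    fun t ht => by rw [eval_restrictLine]; exact hM _ (hseg t ht)
  have hz' : c + (1 : ℝ) • v = z := by simp only [c, v]; module
  have hzw : z - w = (2 : ℝ) • v := by simp only [v]; module
  rw [eval_derivative_restrictLine, hz'] at hmarkov
  rw [hzw, map_smul, smul_eq_mul, abs_mul, abs_two]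
  linarith

theorem norm_fderiv_eval_le (hp : p.totalDegree ≤ d)
    (hM : ∀ x ∈ closedBall (0 : σ → ℝ) 1, |eval x p| ≤ M) {z : σ → ℝ}
    (hz : z ∈ closedBall (0 : σ → ℝ) 1) :
    ‖fderiv ℝ (fun x => eval x p) z‖ ≤ 2 * d ^ 2 * M := by
  have hM0 : 0 ≤ M := (abs_nonneg _).trans (hM z hz)
  refine ContinuousLinearMap.opNorm_le_of_unit_norm (by positivity) fun u hu => ?_
  set D := fderiv ℝ (fun x => eval x p) z
  have hplus := abs_fderiv_eval_sub_le hp hM hz (w := -u) (by simp [hu])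
  have hminus := abs_fderiv_eval_sub_le hp hM hz (w := u) (by simp [hu])
  have hsplit : D u = (D (z - -u) - D (z - u)) / 2 := by
    rw [← map_sub]
    simp only [sub_neg_eq_add, add_sub_sub_cancel, map_add]
    ring
  rw [Real.norm_eq_abs, hsplit, abs_div, abs_two]
  linarith [abs_sub (D (z - -u)) (D (z - u))]

theorem abs_eval_sub_eval_le (hp : p.totalDegree ≤ d)
    (hM : ∀ x ∈ closedBall (0 : σ → ℝ) 1, |eval x p| ≤ M) {x y : σ → ℝ}
    (hx : x ∈ closedBall (0 : σ → ℝ) 1) (hy : y ∈ closedBall (0 : σ → ℝ) 1) :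
    |eval x p - eval y p| ≤ 2 * d ^ 2 * M * ‖x - y‖ :=
  (convex_closedBall (0 : σ → ℝ) 1).norm_image_sub_le_of_norm_fderiv_le
    (fun z _ => differentiable_eval p z) (fun _ hz => norm_fderiv_eval_le hp hM hz) hy hx

end Markov

end MvPolynomial

theorem box_eq_closedBall (n : ℕ) : Box n = closedBall (0 : Fin n → ℝ) 1 := by
  ext x
  simp [Box, pi_norm_le_iff_of_nonneg zero_le_one, Real.norm_eq_abs]

theorem abs_eval_le_supNorm {n : ℕ} (f : MvPolynomial (Fin n) ℝ) {x : Fin n → ℝ}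
    (hx : x ∈ Box n) : |eval x f| ≤ supNorm f := by
  have hcompact : IsCompact (Box n) := box_eq_closedBall n ▸ isCompact_closedBall _ _
  exact le_csSup (hcompact.image (continuous_eval f).abs).bddAbove ⟨x, hx, rfl⟩

theorem supNorm_nonneg {n : ℕ} (f : MvPolynomial (Fin n) ℝ) : 0 ≤ supNorm f :=
  Real.sSup_nonneg <| by rintro _ ⟨x, -, rfl⟩; exact abs_nonneg _

theorem norm_le_sqrt_sum_sq {ι : Type*} [Fintype ι] (v : ι → ℝ) : ‖v‖ ≤ √(∑ i, v i ^ 2) :=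
  (pi_norm_le_iff_of_nonneg (Real.sqrt_nonneg _)).mpr fun i =>
    Real.abs_le_sqrt (Finset.single_le_sum (fun j _ => sq_nonneg (v j)) (Finset.mem_univ i))

theorem euclDist_nonneg {n : ℕ} (x : Fin n → ℝ) (S : Set (Fin n → ℝ)) : 0 ≤ euclDist x S :=
  Real.sInf_nonneg <| by rintro _ ⟨y, -, rfl⟩; exact Real.sqrt_nonneg _

theorem le_mul_euclDist {n : ℕ} {x : Fin n → ℝ} {S : Set (Fin n → ℝ)} {a K : ℝ}
    (hS : S.Nonempty) (hK : 0 ≤ K) (h : ∀ y ∈ S, a ≤ K * √(∑ i, (x i - y i) ^ 2)) :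
    a ≤ K * euclDist x S := by
  have : Nonempty S := hS.to_subtype
  rw [euclDist, sInf_image', Real.mul_iInf_of_nonneg hK]
  exact le_ciInf fun y => h y y.2

/-- `G(x) ≤ 2·d_g²·(max_j ‖g_j‖_sup)·dist(x, S_g)` on `[-1,1]^n`. -/
theorem stmt9 {n m : ℕ} (g : Fin m → MvPolynomial (Fin n) ℝ) (dg : ℕ)
    (hdg : ∀ j, (g j).totalDegree ≤ dg)
    (hne : (Sg g).Nonempty) (hsub : Sg g ⊆ Box n) :
    ∀ x ∈ Box n,
      Gfun g x ≤ 2 * (dg : ℝ) ^ 2 * (⨆ j, supNorm (g j)) * euclDist x (Sg g) := by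
  intro x hx
  rw [box_eq_closedBall] at hx hsub
  set M := ⨆ j, supNorm (g j)
  have hM : ∀ j, supNorm (g j) ≤ M := le_ciSup (Finite.bddAbove_range _)
  have hM0 : 0 ≤ M := Real.iSup_nonneg fun j => supNorm_nonneg _
  have hbound : 0 ≤ 2 * (dg : ℝ) ^ 2 * M * euclDist x (Sg g) :=
    mul_nonneg (by positivity) (euclDist_nonneg x _)
  refine Real.iSup_le (fun j => max_le hbound ?_) hbound
  refine le_mul_euclDist hne (by positivity) fun y hy => ?_
  have hlip : |eval x (g j) - eval y (g j)| ≤ 2 * dg ^ 2 * supNorm (g j) * ‖x - y‖ :=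
    MvPolynomial.abs_eval_sub_eval_le (hdg j)
      (fun z hz => abs_eval_le_supNorm (g j) (by rwa [box_eq_closedBall])) hx (hsub hy)
  calc -eval x (g j) ≤ eval y (g j) - eval x (g j) := by linarith [hy j]
    _ ≤ |eval x (g j) - eval y (g j)| := abs_sub_comm (eval x (g j)) _ ▸ le_abs_self _
    _ ≤ 2 * dg ^ 2 * supNorm (g j) * ‖x - y‖ := hlip
    _ ≤ 2 * dg ^ 2 * M * √(∑ i, (x i - y i) ^ 2) := by
        gcongr
        exacts [hM j, norm_le_sqrt_sum_sq (x - y)]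
end

section
/- Let p be a homogeneous real polynomial in n variables of degree k, with coefficients p_α in the monomial basis. Then max_{α : ‖α‖₁ = k} |p_α|·(α!/k!) ≤ (2e)^k · sup_{x ∈ [0,1]ⁿ} |p(x)|, where α! := α₁!⋯α_n! and e is Euler's number. -/
/-!
For `|α| = k`, apply to `p` the mixed forward difference `∏ᵢ Δ^{αᵢ}` with step `1 / αᵢ` in the
`i`-th variable, at the origin. It annihilates every monomial `x^γ` of degree `k` with `γ ≠ α`
(some `γᵢ < αᵢ`) and sends `x^α` to `∏ᵢ αᵢ! / αᵢ^{αᵢ}`. It only samples `p` at the grid points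
`β / α ∈ [0,1]ⁿ`, with weights of absolute value `∏ᵢ C(αᵢ, βᵢ)` summing to `2^k`, hence
`|p_α| ∏ᵢ αᵢ! / αᵢ^{αᵢ} ≤ 2^k sup_{[0,1]ⁿ} |p|`. It remains to use `a^a ≤ eᵃ a!` and
`∏ᵢ αᵢ! ≤ k!`.
-/

open MvPolynomial

open Finset Nat

section FiniteDifference

open fwdDiff

variable {R : Type*} [CommRing R]

theorem sum_range_alternating_choose_mul_pow_eq_fwdDiff_iter (a g : ℕ) :
    ∑ b ∈ range (a + 1), (-1 : R) ^ (a - b) * a.choose b * (b : R) ^ g =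
      (Δ_[(1 : R)])^[a] (fun r : R ↦ r ^ g) 0 := by
  simp [fwdDiff_iter_eq_sum_shift, zsmul_eq_mul]

theorem sum_range_alternating_choose_mul_pow_of_lt {a g : ℕ} (h : g < a) :
    ∑ b ∈ range (a + 1), (-1 : R) ^ (a - b) * a.choose b * (b : R) ^ g = 0 := by
  rw [sum_range_alternating_choose_mul_pow_eq_fwdDiff_iter, fwdDiff_iter_pow_eq_zero_of_lt h,
    Pi.zero_apply]

theorem sum_range_alternating_choose_mul_pow_self (a : ℕ) :
    ∑ b ∈ range (a + 1), (-1 : R) ^ (a - b) * a.choose b * (b : R) ^ a = a ! := by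
  rw [sum_range_alternating_choose_mul_pow_eq_fwdDiff_iter, fwdDiff_iter_eq_factorial]
  rfl

end FiniteDifference

section GridSums

variable {ι K : Type*} [Fintype ι] [DecidableEq ι] [Field K]

theorem sum_range_alternating_choose_mul_div_pow {a g : ℕ} (h : g ≤ a) :
    ∑ b ∈ range (a + 1), (-1 : K) ^ (a - b) * a.choose b * ((b : K) / a) ^ g =
      if g = a then a ! / (a : K) ^ a else 0 := by
  simp_rw [div_pow, ← mul_div_assoc, ← sum_div]
  rcases h.lt_or_eq with h | rfl
  · rw [sum_range_alternating_choose_mul_pow_of_lt h, zero_div, if_neg h.ne]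
  · rw [sum_range_alternating_choose_mul_pow_self, if_pos rfl]

theorem sum_piFinset_prod_alternating_choose_mul_div_pow {α γ : ι → ℕ}
    (h : ∑ i, γ i = ∑ i, α i) :
    ∑ β ∈ Fintype.piFinset (fun i ↦ range (α i + 1)),
        ∏ i, (-1 : K) ^ (α i - β i) * (α i).choose (β i) * ((β i : K) / α i) ^ γ i =
      if γ = α then ∏ i, (α i)! / (α i : K) ^ α i else 0 := by
  rw [← prod_univ_sum (fun i ↦ range (α i + 1))
    fun i b ↦ (-1 : K) ^ (α i - b) * (α i).choose b * ((b : K) / α i) ^ γ i]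
  by_cases hγ : γ = α
  · subst hγ
    simp only [sum_range_alternating_choose_mul_div_pow le_rfl, if_true]
  obtain ⟨i, hi⟩ : ∃ i, γ i < α i := by
    by_contra! hle
    exact hγ (funext fun i ↦ ((sum_eq_sum_iff_of_le fun i _ ↦ hle i).mp h.symm i
      (mem_univ i)).symm)
  rw [if_neg hγ]
  exact prod_eq_zero (mem_univ i)
    (by rw [sum_range_alternating_choose_mul_div_pow hi.le, if_neg hi.ne])

theorem MvPolynomial.IsHomogeneous.sum_piFinset_mul_eval_div {p : MvPolynomial ι K} {k : ℕ}
    (hp : p.IsHomogeneous k) {α : ι →₀ ℕ} (hα : ∑ i, α i = k) :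
    ∑ β ∈ Fintype.piFinset (fun i ↦ range (α i + 1)),
        (∏ i, (-1 : K) ^ (α i - β i) * (α i).choose (β i)) * eval (fun i ↦ (β i : K) / α i) p =
      coeff α p * ∏ i, (α i)! / (α i : K) ^ α i := by
  have hdeg : ∀ γ ∈ p.support, ∑ i, γ i = ∑ i, α i := fun γ hγ ↦ by
    rw [hα, hp.degree_eq_sum_deg_support hγ, ← Finsupp.degree_apply, Finsupp.degree_eq_sum]
  simp_rw [eval_eq', mul_sum]
  rw [sum_comm]
  calc _ = ∑ γ ∈ p.support, coeff γ p * ∑ β ∈ Fintype.piFinset (fun i ↦ range (α i + 1)),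
          ∏ i, (-1 : K) ^ (α i - β i) * (α i).choose (β i) * ((β i : K) / α i) ^ γ i := by
        simp_rw [mul_sum, prod_mul_distrib]
        exact sum_congr rfl fun _ _ ↦ sum_congr rfl fun _ _ ↦ by ring
    _ = ∑ γ ∈ p.support, if γ = α then coeff γ p * ∏ i, (α i)! / (α i : K) ^ α i else 0 := by
        refine sum_congr rfl fun γ hγ ↦ ?_
        rw [sum_piFinset_prod_alternating_choose_mul_div_pow (hdeg γ hγ), mul_ite, mul_zero]
        simp only [DFunLike.coe_fn_eq]
    _ = coeff α p * ∏ i, (α i)! / (α i : K) ^ α i := by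
        rw [sum_ite_eq']
        split_ifs with hα
        · rfl
        · rw [notMem_support_iff.mp hα, zero_mul]

theorem sum_piFinset_prod_choose (α : ι → ℕ) :
    ∑ β ∈ Fintype.piFinset (fun i ↦ range (α i + 1)), ∏ i, (α i).choose (β i) = 2 ^ ∑ i, α i := by
  rw [← prod_univ_sum (fun i ↦ range (α i + 1)) fun i b ↦ (α i).choose b,
    ← prod_pow_eq_pow_sum]
  exact prod_congr rfl fun i _ ↦ Nat.sum_range_choose (α i)

end GridSums

theorem box01_eq_Icc (n : ℕ) : Box01 n = Set.Icc 0 1 := by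
  ext x
  simp [Box01, Pi.le_def, forall_and]

theorem div_mem_box01 {n : ℕ} {α β : Fin n → ℕ} (h : ∀ i, β i ≤ α i) :
    (fun i ↦ (β i : ℝ) / α i) ∈ Box01 n :=
  fun i ↦ ⟨by positivity, div_le_one_of_le₀ (by exact_mod_cast h i) (by positivity)⟩

theorem abs_eval_le_supNorm01 {n : ℕ} (p : MvPolynomial (Fin n) ℝ) {x : Fin n → ℝ}
    (hx : x ∈ Box01 n) : |eval x p| ≤ supNorm01 p := by
  refine le_csSup ?_ ⟨x, hx, rfl⟩
  rw [box01_eq_Icc]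
  exact (isCompact_Icc.image (continuous_eval p).abs).bddAbove

theorem abs_coeff_mul_prod_factorial_div_pow_le {n k : ℕ} {p : MvPolynomial (Fin n) ℝ}
    (hp : p.IsHomogeneous k) {α : Fin n →₀ ℕ} (hα : ∑ i, α i = k) :
    |coeff α p| * ∏ i, ((α i)! / (α i : ℝ) ^ α i) ≤ 2 ^ k * supNorm01 p := by
  rw [← abs_of_nonneg (by positivity : (0 : ℝ) ≤ ∏ i, ((α i)! / (α i : ℝ) ^ α i)), ← abs_mul,
    ← hp.sum_piFinset_mul_eval_div hα]
  set G := Fintype.piFinset (fun i ↦ range (α i + 1))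
  have hterm : ∀ β ∈ G, |(∏ i, (-1 : ℝ) ^ (α i - β i) * (α i).choose (β i)) *
      eval (fun i ↦ (β i : ℝ) / α i) p| ≤ ((∏ i, (α i).choose (β i) : ℕ) : ℝ) * supNorm01 p := by
    intro β hβ
    have hβα : ∀ i, β i ≤ α i := fun i ↦
      Nat.lt_succ_iff.mp (mem_range.mp (Fintype.mem_piFinset.mp hβ i))
    rw [abs_mul, abs_prod]
    push_cast
    simp only [abs_mul, abs_pow, abs_neg, abs_one, one_pow, one_mul, Nat.abs_cast]
    exact mul_le_mul_of_nonneg_left (abs_eval_le_supNorm01 p (div_mem_box01 hβα))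
      (by positivity)
  calc _ ≤ ∑ β ∈ G, |(∏ i, (-1 : ℝ) ^ (α i - β i) * (α i).choose (β i)) *
          eval (fun i ↦ (β i : ℝ) / α i) p| := abs_sum_le_sum_abs _ _
    _ ≤ ∑ β ∈ G, ((∏ i, (α i).choose (β i) : ℕ) : ℝ) * supNorm01 p := sum_le_sum hterm
    _ = 2 ^ k * supNorm01 p := by
        rw [← sum_mul, ← Nat.cast_sum, sum_piFinset_prod_choose, hα]
        push_cast
        rfl

theorem pow_self_le_exp_mul_factorial (a : ℕ) : (a : ℝ) ^ a ≤ Real.exp a * a ! :=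
  (div_le_iff₀ (by positivity)).mp (Real.pow_div_factorial_le_exp _ a.cast_nonneg a)

theorem prod_pow_self_le_exp_mul_factorial_sum {ι : Type*} (s : Finset ι) (f : ι → ℕ) :
    ∏ i ∈ s, (f i : ℝ) ^ f i ≤ Real.exp (∑ i ∈ s, f i : ℕ) * (∑ i ∈ s, f i)! := by
  have hfac : ((∏ i ∈ s, (f i)! : ℕ) : ℝ) ≤ (∑ i ∈ s, f i)! :=
    Nat.cast_le.mpr (Nat.le_of_dvd (factorial_pos _) (prod_factorial_dvd_factorial_sum s f))
  calc ∏ i ∈ s, (f i : ℝ) ^ f i ≤ ∏ i ∈ s, Real.exp (f i) * (f i)! :=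
        prod_le_prod (fun _ _ ↦ by positivity) fun i _ ↦ pow_self_le_exp_mul_factorial (f i)
    _ = Real.exp (∑ i ∈ s, f i : ℕ) * ((∏ i ∈ s, (f i)! : ℕ) : ℝ) := by
        rw [prod_mul_distrib, Nat.cast_sum, Real.exp_sum, Nat.cast_prod]
    _ ≤ Real.exp (∑ i ∈ s, f i : ℕ) * (∑ i ∈ s, f i)! := by gcongr

/-- coefficient bound for homogeneous polynomials on `[0,1]^n`. -/
theorem stmt15 {n : ℕ} (p : MvPolynomial (Fin n) ℝ) (k : ℕ)
    (hp : p.IsHomogeneous k) :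
    ∀ α : Fin n →₀ ℕ, (∑ i, α i) = k →
      |MvPolynomial.coeff α p| * ((∏ i, (α i).factorial : ℕ) : ℝ) / (k.factorial : ℝ)
        ≤ (2 * Real.exp 1) ^ k * supNorm01 p := by
  intro α hα
  have hcoeff := abs_coeff_mul_prod_factorial_div_pow_le hp hα
  have hpow : ∏ i, (α i : ℝ) ^ α i ≤ Real.exp 1 ^ k * k ! := by
    simpa only [hα, Real.exp_one_pow] using prod_pow_self_le_exp_mul_factorial_sum univ α
  have hsplit : ((∏ i, (α i)! : ℕ) : ℝ) =
      (∏ i, ((α i)! / (α i : ℝ) ^ α i)) * ∏ i, (α i : ℝ) ^ α i := by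
    rw [← prod_mul_distrib, Nat.cast_prod]
    refine prod_congr rfl fun i _ ↦ (div_mul_cancel₀ _ ?_).symm
    exact_mod_cast Nat.pow_self_pos.ne'
  rw [div_le_iff₀ (by positivity), hsplit, ← mul_assoc]
  calc _ ≤ (2 ^ k * supNorm01 p) * (Real.exp 1 ^ k * k !) :=
        mul_le_mul hcoeff hpow (by positivity) ((by positivity : (0 : ℝ) ≤ _).trans hcoeff)
    _ = _ := by ring
end
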